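/- Let Σ ⊂ ℝ^n be a compact convex set containing 0 in its interior, let v_0,...,v_k be points with Σ equal to the convex hull of the v_i, and let v ∈ ℝ^n be nonzero. If α ∈ (0,1) satisfies that (-α/(1-α))·v lies in the interior of Σ, then ∫_{ℝ^n} e^{-α⟨v,y⟩}/(∑_i e^{⟨v_i,y⟩})^{1-α} dy < ∞. -/

import Mathlib

/-!
Let `w = -(α / (1 - α)) • u`, so that the numerator is `exp ((1 - α) ⟪w, y⟫)`. Since `w` is an
interior point of `Σ = conv {vᵢ}`, some ball `closedBall w r` lies in `Σ`, so the support
function `max_i ⟪vᵢ, y⟫` of `Σ` is at least `⟪w + r y / ‖y‖, y⟫ = ⟪w, y⟫ + r ‖y‖`, whence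
`∑ᵢ exp ⟪vᵢ, y⟫ ≥ exp (⟪w, y⟫ + r ‖y‖)`. Hence the integrand is at most `exp (-(1 - α) r ‖y‖)`,
which is integrable.
-/

open MeasureTheory Real Metric Nat Finset

theorem exp_neg_mul_le_mul_inv_one_add_pow {c t : ℝ} (hc : 0 < c) (ht : 0 ≤ t) (N : ℕ) :
    exp (-c * t) ≤ exp c * N ! / c ^ N * ((1 + t) ^ N)⁻¹ := by
  have h := pow_div_factorial_le_exp _ (mul_nonneg hc.le (by linarith : (0 : ℝ) ≤ 1 + t)) N
  rw [mul_pow, mul_add, mul_one, exp_add, div_le_iff₀ (by positivity)] at h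
  rw [neg_mul, exp_neg]
  have : 0 < (1 + t) ^ N := by positivity
  field_simp
  nlinarith [exp_pos (c * t), exp_pos c]

theorem integrable_exp_neg_mul_norm {E : Type*} [NormedAddCommGroup E] [NormedSpace ℝ E]
    [FiniteDimensional ℝ E] [MeasurableSpace E] [BorelSpace E] (μ : Measure E)
    [μ.IsAddHaarMeasure] {c : ℝ} (hc : 0 < c) :
    Integrable (fun x : E => exp (-c * ‖x‖)) μ := by
  set N := Module.finrank ℝ E + 1
  have hN : (Module.finrank ℝ E : ℝ) < (N : ℝ) := by push_cast [N]; linarith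
  refine ((integrable_one_add_norm hN).const_mul (exp c * N ! / c ^ N)).mono' (by fun_prop)
    (ae_of_all _ fun x => ?_)
  rw [norm_of_nonneg (exp_pos _).le, rpow_neg (by positivity), rpow_natCast]
  exact exp_neg_mul_le_mul_inv_one_add_pow hc (norm_nonneg x) N

section ConvexHull

variable {E : Type*} [NormedAddCommGroup E] [InnerProductSpace ℝ E] {ι : Type*} [Fintype ι]

theorem exp_inner_le_sum_exp_of_mem_convexHull (v : ι → E) {x : E}
    (hx : x ∈ convexHull ℝ (Set.range v)) (y : E) :
    exp (inner ℝ x y) ≤ ∑ i, exp (inner ℝ (v i) y) := by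
  obtain ⟨_, ⟨j, rfl⟩, hj⟩ := (((innerₛₗ ℝ).flip y).convexOn convex_univ).exists_ge_of_mem_convexHull
    (Set.subset_univ _) hx
  exact (exp_le_exp.2 hj).trans
    (single_le_sum (f := fun i => exp (inner ℝ (v i) y)) (fun i _ => (exp_pos _).le) (mem_univ j))

theorem exp_inner_add_mul_norm_le_sum_exp (v : ι → E) {w : E} {r : ℝ} (hr : 0 ≤ r)
    (hball : closedBall w r ⊆ convexHull ℝ (Set.range v)) (y : E) :
    exp (inner ℝ w y + r * ‖y‖) ≤ ∑ i, exp (inner ℝ (v i) y) := by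
  have hmem : w + (r / ‖y‖) • y ∈ closedBall w r := by
    rw [mem_closedBall, dist_self_add_left, norm_smul, norm_div, norm_norm, norm_of_nonneg hr,
      div_mul_eq_mul_div, mul_div_assoc]
    exact mul_le_of_le_one_right hr (div_self_le_one _)
  have hinner : inner ℝ (w + (r / ‖y‖) • y) y = inner ℝ w y + r * ‖y‖ := by
    rw [inner_add_left, real_inner_smul_left, real_inner_self_eq_norm_sq]
    rcases eq_or_ne ‖y‖ 0 with hy | hy
    · simp [hy]
    · field_simp
  simpa [hinner] using exp_inner_le_sum_exp_of_mem_convexHull v (hball hmem) y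

theorem exp_mul_inner_div_rpow_sum_exp_le (v : ι → E) {w : E} {r β : ℝ} (hr : 0 ≤ r)
    (hβ : 0 ≤ β) (hball : closedBall w r ⊆ convexHull ℝ (Set.range v)) (y : E) :
    exp (β * inner ℝ w y) / (∑ i, exp (inner ℝ (v i) y)) ^ β ≤ exp (-(β * r) * ‖y‖) := by
  have hsum := exp_inner_add_mul_norm_le_sum_exp v hr hball y
  rw [div_le_iff₀ (rpow_pos_of_pos ((exp_pos _).trans_le hsum) β)]
  calc exp (β * inner ℝ w y) = exp (-(β * r) * ‖y‖) * exp (inner ℝ w y + r * ‖y‖) ^ β := by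
        rw [← exp_mul, ← exp_add]; ring_nf
    _ ≤ exp (-(β * r) * ‖y‖) * (∑ i, exp (inner ℝ (v i) y)) ^ β := by gcongr

end ConvexHull

theorem stmt_2_general {n k : ℕ} (v : Fin (k + 1) → EuclideanSpace ℝ (Fin n))
    (S : Set (EuclideanSpace ℝ (Fin n)))
    (hS : S = convexHull ℝ (Set.range v))
    (u : EuclideanSpace ℝ (Fin n))
    (α : ℝ) (hα : α ∈ Set.Ioo (0 : ℝ) 1)
    (hmem : (-(α / (1 - α))) • u ∈ interior S) :
    Integrable (fun y : EuclideanSpace ℝ (Fin n) =>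
      Real.exp (-α * (inner ℝ u y : ℝ)) /
        (∑ i, Real.exp (inner ℝ (v i) y : ℝ)) ^ (1 - α)) := by
  have hβ : 0 < 1 - α := sub_pos.2 hα.2
  obtain ⟨r, hr, hball⟩ := nhds_basis_closedBall.mem_iff.1 (mem_interior_iff_mem_nhds.1 hmem)
  subst hS
  refine (integrable_exp_neg_mul_norm volume (mul_pos hβ hr)).mono'
    (by fun_prop : Measurable _).aestronglyMeasurable (ae_of_all _ fun y => ?_)
  have hnum : -α * inner ℝ u y = (1 - α) * inner ℝ ((-(α / (1 - α))) • u) y := by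
    rw [real_inner_smul_left]; field_simp
  rw [norm_of_nonneg (by positivity), hnum]
  exact exp_mul_inner_div_rpow_sum_exp_le v hr.le hβ.le hball y

theorem stmt_2 {n k : ℕ} (v : Fin (k + 1) → EuclideanSpace ℝ (Fin n))
    (S : Set (EuclideanSpace ℝ (Fin n)))
    (hS : S = convexHull ℝ (Set.range v))
    (hcpt : IsCompact S) (hconv : Convex ℝ S)
    (h0 : (0 : EuclideanSpace ℝ (Fin n)) ∈ interior S)
    (u : EuclideanSpace ℝ (Fin n)) (hu : u ≠ 0)
    (α : ℝ) (hα : α ∈ Set.Ioo (0 : ℝ) 1)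
    (hmem : (-(α / (1 - α))) • u ∈ interior S) :
    Integrable (fun y : EuclideanSpace ℝ (Fin n) =>
      Real.exp (-α * (inner ℝ u y : ℝ)) /
        (∑ i, Real.exp (inner ℝ (v i) y : ℝ)) ^ (1 - α)) :=
  stmt_2_general v S hS u α hα hmem
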